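/- arXiv:2302.14356 — 2 statements merged into one kernel-verified Lean document; each statement's English description precedes it below -/
import Mathlib

section
/- Let X₁,…,Xₙ be i.i.d. binary with P(X_i = 0) = p, q = 1 − p > 0, m₁ < … < m_h, wᵢ = 1·0^{mᵢ}. Then for d < h and all t, |P(D_{n,(m₁,…,m_d)}(X₁…Xₙ) = t) − P(D_{n,(m₁,…,m_h)}(X₁…Xₙ) = t)| ≤ 2(n + 1 − m_{d+1}) p^{m_{d+1}}. -/
open Finset
open scoped BigOperators Classical

noncomputable section

/-- Number of occurrences of the word `w` in the string `x`. -/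
def occCount {A : Type*} [DecidableEq A] (w x : List A) : ℕ :=
  (List.range (x.length + 1 - w.length)).countP
    (fun i => decide (List.take w.length (List.drop i x) = w))

/-- A word is nonoverlapping if no string of length `< 2|w|` contains two occurrences. -/
def Nonoverlapping {A : Type*} [DecidableEq A] (w : List A) : Prop :=
  ¬ ∃ z : List A, z.length < 2 * w.length ∧ 2 ≤ occCount w z

/-- Probability of a word under the i.i.d. letter law `P`. -/
def wordProb {A : Type*} (P : A → ℝ) (w : List A) : ℝ := (w.map P).prod

/-- Probability of the event `E` for `n` i.i.d. letters with law `P`. -/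
def strProb {A : Type*} [Fintype A] (P : A → ℝ) (n : ℕ)
    (E : (Fin n → A) → Prop) : ℝ :=
  ∑ x : Fin n → A, if E x then (∏ i, P (x i)) else 0

/-- `Cstat ws x = Σ i·kᵢ` where `(k₁,…,k_h) = N′(w₁,…,w_h; x)` is the
successive-difference vector of occurrence counts. -/
def Cstat {A : Type*} [DecidableEq A] {h : ℕ} (ws : Fin h → List A) (x : List A) : ℕ :=
  ∑ i : Fin h, (i.val + 1) *
    (occCount (ws i) x -
      if hlt : i.val + 1 < h then occCount (ws ⟨i.val + 1, hlt⟩) x else 0)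

/-- The word `1·0^m`. -/
def runWord (m : ℕ) : List Bool := true :: List.replicate m false

/-- `Dstat ms x = C_{n+1,(1·0^{m₁},…,1·0^{m_h})}(1x)`. -/
def Dstat {h : ℕ} (ms : Fin h → ℕ) (x : List Bool) : ℕ :=
  Cstat (fun i => runWord (ms i)) (true :: x)

lemma occCount_le_of_prefix {w v : List Bool} (hwv : w <+: v) (x : List Bool) :
    occCount v x ≤ occCount w x := by
  unfold occCount
  have hlen : x.length + 1 - v.length ≤ x.length + 1 - w.length :=
    Nat.sub_le_sub_left hwv.length_le _
  calc (List.range (x.length + 1 - v.length)).countP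
        (fun i => decide (List.take v.length (List.drop i x) = v))
      ≤ (List.range (x.length + 1 - v.length)).countP
        (fun i => decide (List.take w.length (List.drop i x) = w)) := by
        apply List.countP_mono_left
        intro a _ ha
        simp only [decide_eq_true_eq] at ha ⊢
        have h1 : ((List.drop a x).take v.length).take w.length = (List.drop a x).take w.length := by
          simp [List.take_take, Nat.min_eq_left hwv.length_le]
        rw [← h1, ha, (List.prefix_iff_eq_take.mp hwv).symm]
    _ ≤ (List.range (x.length + 1 - w.length)).countP
        (fun i => decide (List.take w.length (List.drop i x) = w)) :=
        (List.range_sublist.mpr hlen).countP_le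

lemma runWord_prefix {a b : ℕ} (hab : a ≤ b) : runWord a <+: runWord b := by
  refine ⟨List.replicate (b - a) false, ?_⟩
  simp only [runWord, List.cons_append, ← List.replicate_add, Nat.add_sub_cancel' hab]

lemma Cstat_trunc {h d : ℕ} (hdh : d < h) (ws : Fin h → List Bool) (s : List Bool)
    (H : ∀ i : Fin h, d ≤ i.val → occCount (ws i) s = 0) :
    Cstat (fun i : Fin d => ws (Fin.castLE hdh.le i)) s = Cstat ws s := by
  classical
  set N : ℕ → ℕ := fun j => if hj : j < h then occCount (ws ⟨j, hj⟩) s else 0 with hN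
  have hN0 : ∀ j, d ≤ j → N j = 0 := by
    intro j hj
    by_cases hjh : j < h
    · simp only [hN, dif_pos hjh]; exact H ⟨j, hjh⟩ hj
    · simp [hN, hjh]
  have full : Cstat ws s = ∑ j ∈ Finset.range h, (j + 1) * (N j - N (j + 1)) := by
    rw [Cstat, ← Fin.sum_univ_eq_sum_range]
    refine Finset.sum_congr rfl fun i _ => ?_
    simp only [hN, dif_pos i.isLt, Fin.eta]
  have trunc : Cstat (fun i : Fin d => ws (Fin.castLE hdh.le i)) s
      = ∑ j ∈ Finset.range d, (j + 1) * (N j - N (j + 1)) := by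
    rw [Cstat, ← Fin.sum_univ_eq_sum_range]
    refine Finset.sum_congr rfl fun i _ => ?_
    have hih : i.val < h := lt_of_lt_of_le i.isLt hdh.le
    by_cases hi : i.val + 1 < d
    · have hih1 : i.val + 1 < h := lt_of_lt_of_le hi hdh.le
      simp only [hN, dif_pos hih, dif_pos hi, dif_pos hih1]
      rfl
    · have hid : i.val + 1 = d := by omega
      have hih1 : i.val + 1 < h := by omega
      simp only [hN, dif_pos hih, dif_neg hi, dif_pos hih1,
        H ⟨i.val + 1, hih1⟩ (le_of_eq hid.symm)]
      rfl
  rw [full, trunc]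
  refine Finset.sum_subset (Finset.range_subset_range.mpr hdh.le) ?_
  intro j hj hjd
  have : d ≤ j := by simpa using hjd
  rw [hN0 j this, Nat.zero_sub, Nat.mul_zero]

lemma weight_nonneg (p q : ℝ) (hp : 0 ≤ p) (hq : 0 ≤ q) {n : ℕ} (x : Fin n → Bool) :
    0 ≤ ∏ i, (if x i then q else p) :=
  Finset.prod_nonneg fun i _ => by split <;> assumption

lemma strProb_nonneg (p q : ℝ) (hp : 0 ≤ p) (hq : 0 ≤ q) {n : ℕ}
    (E : (Fin n → Bool) → Prop) :
    0 ≤ strProb (fun b => if b then q else p) n E :=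
  Finset.sum_nonneg fun x _ => by
    dsimp only
    split
    · exact weight_nonneg p q hp hq x
    · exact le_refl 0

lemma strProb_mono (p q : ℝ) (hp : 0 ≤ p) (hq : 0 ≤ q) {n : ℕ}
    (A B : (Fin n → Bool) → Prop) (hAB : ∀ x, A x → B x) :
    strProb (fun b => if b then q else p) n A ≤ strProb (fun b => if b then q else p) n B := by
  refine Finset.sum_le_sum fun x _ => ?_
  dsimp only
  by_cases hA : A x
  · rw [if_pos hA, if_pos (hAB x hA)]
  · rw [if_neg hA]
    split
    · exact weight_nonneg p q hp hq x
    · exact le_refl 0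

lemma strProb_abs_sub_le (p q : ℝ) (hp : 0 ≤ p) (hq : 0 ≤ q) {n : ℕ}
    (A B E : (Fin n → Bool) → Prop) (hE : ∀ x, ¬ E x → (A x ↔ B x)) :
    |strProb (fun b => if b then q else p) n A - strProb (fun b => if b then q else p) n B| ≤
      strProb (fun b => if b then q else p) n E := by
  unfold strProb
  rw [← Finset.sum_sub_distrib]
  refine (Finset.abs_sum_le_sum_abs _ _).trans (Finset.sum_le_sum ?_)
  intro x _
  dsimp only
  have hw := weight_nonneg p q hp hq x
  by_cases hEx : E x
  · rw [if_pos hEx]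
    by_cases hA : A x <;> by_cases hB : B x <;>
      simp only [if_pos, if_neg, hA, hB, if_true, if_false, sub_zero, zero_sub, sub_self,
        abs_zero, abs_neg, abs_of_nonneg hw] <;> linarith
  · rw [if_neg hEx]
    have hiff := hE x hEx
    by_cases hA : A x
    · simp [hA, hiff.mp hA]
    · rw [if_neg hA, if_neg (fun hbb => hA (hiff.mpr hbb))]
      simp

lemma strProb_union_le (p q : ℝ) (hp : 0 ≤ p) (hq : 0 ≤ q) {n : ℕ}
    (A : (Fin n → Bool) → Prop) (I : Finset ℕ) (B : ℕ → (Fin n → Bool) → Prop)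
    (hAB : ∀ x, A x → ∃ i ∈ I, B i x) :
    strProb (fun b => if b then q else p) n A ≤
      ∑ i ∈ I, strProb (fun b => if b then q else p) n (B i) := by
  unfold strProb
  rw [Finset.sum_comm]
  refine Finset.sum_le_sum fun x _ => ?_
  dsimp only
  have hw := weight_nonneg p q hp hq x
  by_cases hA : A x
  · obtain ⟨i, hi, hBi⟩ := hAB x hA
    rw [if_pos hA]
    calc (∏ j, if x j then q else p) = (if B i x then (∏ j, if x j then q else p) else 0) := by
          rw [if_pos hBi]
      _ ≤ ∑ i ∈ I, (if B i x then (∏ j, if x j then q else p) else 0) :=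
          Finset.single_le_sum (f := fun i => if B i x then (∏ j, if x j then q else p) else 0)
            (fun j _ => by split; exact hw; exact le_refl 0) hi
  · rw [if_neg hA]
    exact Finset.sum_nonneg fun j _ => by split; exact hw; exact le_refl 0

lemma strProb_cyl (p q : ℝ) (hpq : p + q = 1) (hp : 0 ≤ p) (hq : 0 ≤ q) {n : ℕ}
    (S : Finset (Fin n)) :
    strProb (fun b => if b then q else p) n (fun x => ∀ j ∈ S, x j = false) = p ^ S.card := by
  unfold strProb
  have key : ∀ x : Fin n → Bool,
      (if (∀ j ∈ S, x j = false) then (∏ i, if x i then q else p) else 0)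
        = ∏ i, (if i ∈ S then (if x i then 0 else p) else (if x i then q else p)) := by
    intro x
    by_cases hx : ∀ j ∈ S, x j = false
    · rw [if_pos hx]
      refine Finset.prod_congr rfl fun i _ => ?_
      by_cases hi : i ∈ S
      · simp [hi, hx i hi]
      · simp [hi]
    · rw [if_neg hx, eq_comm]
      push_neg at hx
      obtain ⟨j, hj, hxj⟩ := hx
      have hxt : x j = true := by simpa using hxj
      exact Finset.prod_eq_zero (Finset.mem_univ j) (by simp [hj, hxt])
  simp_rw [key]
  have := Finset.prod_univ_sum (fun _ : Fin n => (Finset.univ : Finset Bool))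
    (fun i b => if i ∈ S then (if b then (0:ℝ) else p) else (if b then q else p))
  rw [Fintype.piFinset_univ] at this
  rw [← this]
  have : ∀ i : Fin n, (∑ b : Bool, if i ∈ S then (if b then (0:ℝ) else p) else (if b then q else p))
      = if i ∈ S then p else 1 := by
    intro i
    rw [Fintype.sum_bool]
    by_cases hi : i ∈ S <;> simp [hi] <;> linarith
  simp_rw [this]
  rw [Finset.prod_ite_mem, Finset.univ_inter, Finset.prod_const]

lemma coord_false {n m i : ℕ} (x : Fin n → Bool) (him : i + m ≤ n)
    (hx : List.take (m + 1) (List.drop i (true :: List.ofFn x)) = runWord m)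
    (j : ℕ) (hj : j < m) : x ⟨i + j, by omega⟩ = false := by
  have h1 := congrArg (fun l : List Bool => l[j + 1]?) hx
  simp only [List.getElem?_take, List.getElem?_drop, runWord, List.getElem?_cons_succ,
    List.getElem?_replicate, if_pos (by omega : j + 1 < m + 1), if_pos hj] at h1
  rw [show i + (j + 1) = (i + j) + 1 by omega, List.getElem?_cons_succ,
    List.getElem?_ofFn] at h1
  simp only [List.ofFnNthVal, dif_pos (by omega : i + j < n)] at h1
  exact Option.some_injective _ h1

lemma occ_event_le (p q : ℝ) (hpq : p + q = 1) (hp : 0 ≤ p) (hq : 0 ≤ q)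
    {n m : ℕ} (i : ℕ) (him : i + m ≤ n) :
    strProb (fun b => if b then q else p) n
      (fun x => List.take (m + 1) (List.drop i (true :: List.ofFn x)) = runWord m) ≤ p ^ m := by
  set S : Finset (Fin n) :=
    (Finset.univ : Finset (Fin m)).image (fun j : Fin m => (⟨i + j.val, by omega⟩ : Fin n)) with hS
  have hcard : S.card = m := by
    rw [hS, Finset.card_image_of_injective _ (fun a b hab => by
      have := Fin.mk.injEq .. ▸ hab
      exact Fin.ext (by omega : a.val = b.val))]
    simp
  have hmono : ∀ x : Fin n → Bool,
      (List.take (m + 1) (List.drop i (true :: List.ofFn x)) = runWord m) →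
      ∀ k ∈ S, x k = false := by
    intro x hx k hk
    rw [hS, Finset.mem_image] at hk
    obtain ⟨j, _, rfl⟩ := hk
    exact coord_false x him hx j.val j.isLt
  calc strProb (fun b => if b then q else p) n
        (fun x => List.take (m + 1) (List.drop i (true :: List.ofFn x)) = runWord m)
      ≤ strProb (fun b => if b then q else p) n (fun x => ∀ k ∈ S, x k = false) :=
        strProb_mono p q hp hq _ _ hmono
    _ = p ^ S.card := strProb_cyl p q hpq hp hq S
    _ = p ^ m := by rw [hcard]

/-- Truncation bound for the `D` statistic:
`|P(D_{n,(m₁,…,m_d)} = t) − P(D_{n,(m₁,…,m_h)} = t)| ≤ 2(n+1−m_{d+1})p^{m_{d+1}}`. -/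
theorem stmt16 (p q : ℝ) (hpq : p + q = 1) (hp : 0 ≤ p) (hq : 0 < q)
    (n h d : ℕ) (hdh : d < h) (ms : Fin h → ℕ) (hms : StrictMono ms) (t : ℕ) :
    |strProb (fun b => if b then q else p) n
        (fun x => Dstat (fun i : Fin d => ms (Fin.castLE hdh.le i)) (List.ofFn x) = t) -
      strProb (fun b => if b then q else p) n
        (fun x => Dstat ms (List.ofFn x) = t)| ≤
      2 * ((n + 1 - ms ⟨d, hdh⟩ : ℕ) : ℝ) * p ^ (ms ⟨d, hdh⟩) := by
  have hq' : (0:ℝ) ≤ q := le_of_lt hq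
  set m : ℕ := ms ⟨d, hdh⟩ with hm
  set E : (Fin n → Bool) → Prop :=
    fun x => occCount (runWord m) (true :: List.ofFn x) ≠ 0 with hE
  have step1 : |strProb (fun b => if b then q else p) n
        (fun x => Dstat (fun i : Fin d => ms (Fin.castLE hdh.le i)) (List.ofFn x) = t) -
      strProb (fun b => if b then q else p) n
        (fun x => Dstat ms (List.ofFn x) = t)| ≤
      strProb (fun b => if b then q else p) n E := by
    apply strProb_abs_sub_le p q hp hq' _ _ _
    intro x hEx
    have h0 : occCount (runWord m) (true :: List.ofFn x) = 0 := by
      by_contra hc; exact hEx hc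
    have H : ∀ i : Fin h, d ≤ i.val →
        occCount (runWord (ms i)) (true :: List.ofFn x) = 0 := by
      intro i hi
      have hle : m ≤ ms i := hms.monotone (show (⟨d, hdh⟩ : Fin h) ≤ i from hi)
      exact Nat.le_zero.mp (h0 ▸ occCount_le_of_prefix (runWord_prefix hle) _)
    have := Cstat_trunc hdh (fun i => runWord (ms i)) (true :: List.ofFn x) H
    unfold Dstat
    rw [this]
  have step2 : strProb (fun b => if b then q else p) n E ≤ ((n + 1 - m : ℕ) : ℝ) * p ^ m := by
    have hunion : ∀ x : Fin n → Bool, E x → ∃ i ∈ Finset.range (n + 1 - m),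
        List.take (m + 1) (List.drop i (true :: List.ofFn x)) = runWord m := by
      intro x hEx
      have hpos : 0 < (List.range ((true :: List.ofFn x).length + 1 - (runWord m).length)).countP
          (fun i => decide (List.take (runWord m).length (List.drop i (true :: List.ofFn x)) = runWord m)) :=
        Nat.pos_of_ne_zero hEx
      rw [List.countP_pos_iff] at hpos
      obtain ⟨a, ha, hpa⟩ := hpos
      rw [List.mem_range] at ha
      have hlen : (true :: List.ofFn x).length + 1 - (runWord m).length = n + 1 - m := by
        simp [runWord]
      have hwl : (runWord m).length = m + 1 := by simp [runWord]
      refine ⟨a, Finset.mem_range.mpr (hlen ▸ ha), ?_⟩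
      rw [← hwl]
      exact of_decide_eq_true hpa
    calc strProb (fun b => if b then q else p) n E
        ≤ ∑ i ∈ Finset.range (n + 1 - m), strProb (fun b => if b then q else p) n
            (fun x => List.take (m + 1) (List.drop i (true :: List.ofFn x)) = runWord m) :=
          strProb_union_le p q hp hq' _ _ _ hunion
      _ ≤ ∑ i ∈ Finset.range (n + 1 - m), p ^ m := by
          refine Finset.sum_le_sum fun i hi => ?_
          rw [Finset.mem_range] at hi
          exact occ_event_le p q hpq hp hq' i (by omega)
      _ = ((n + 1 - m : ℕ) : ℝ) * p ^ m := by
          rw [Finset.sum_const, Finset.card_range, nsmul_eq_mul]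
  have hX : (0:ℝ) ≤ ((n + 1 - m : ℕ) : ℝ) * p ^ m :=
    mul_nonneg (Nat.cast_nonneg _) (pow_nonneg hp m)
  calc _ ≤ ((n + 1 - m : ℕ) : ℝ) * p ^ m := le_trans step1 step2
    _ ≤ 2 * ((n + 1 - m : ℕ) : ℝ) * p ^ m := by nlinarith
end
end

section
/- For the set G(n,t,|w₁|,…,|w_d|) = {(r,k₁,…,k_d) ∈ ℤ_{≥0}^{d+1} : Σ kᵢ|wᵢ| ≤ n and Σ i·kᵢ − t ≤ r ≤ Σ kᵢ}, we have |G(n,t,|w₁|,…,|w_d|)| ≤ (t+1) · (t + d(d−1)/2)^{d−1} / ((d−1)!)² · (n/|w₁| + 1). -/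
open Finset

lemma iicSum_inj {m : ℕ} {u v : Fin m → ℕ}
    (h : ∀ i : Fin m, ∑ j ∈ Iic i, u j = ∑ j ∈ Iic i, v j) : u = v := by
  suffices H : ∀ n (i : Fin m), i.val = n → u i = v i from funext fun i => H i.val i rfl
  intro n
  induction n using Nat.strong_induction_on with
  | _ n ih =>
    intro i hi
    have hIio : ∑ j ∈ Iio i, u j = ∑ j ∈ Iio i, v j :=
      Finset.sum_congr rfl fun j hj => ih j.val (by have := Finset.mem_Iio.mp hj; omega) j rfl
    have hIic := h i
    rw [← Finset.Iio_insert, Finset.sum_insert (by simp), Finset.sum_insert (by simp)] at hIic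
    omega

lemma strictMono_image_inj {m : ℕ} {f g : Fin m → ℕ} (hf : StrictMono f) (hg : StrictMono g)
    (h : image f univ = image g univ) : f = g := by
  have hcard : (image f univ).card = m := by
    rw [Finset.card_image_of_injective _ hf.injective, card_univ, Fintype.card_fin]
  have h1 := Finset.orderEmbOfFin_unique hcard
    (fun i => mem_image_of_mem f (mem_univ i)) hf
  have h2 := Finset.orderEmbOfFin_unique hcard
    (fun i => h ▸ mem_image_of_mem g (mem_univ i)) hg
  exact h1.trans h2.symm

def ps {m : ℕ} (u : Fin m → ℕ) (i : Fin m) : ℕ := i.val + ∑ j ∈ Iic i, u j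

lemma ps_strictMono {m : ℕ} (u : Fin m → ℕ) : StrictMono (ps u) := by
  intro i i' hlt
  unfold ps
  exact Nat.add_lt_add_of_lt_of_le hlt
    (Finset.sum_le_sum_of_subset (Finset.Iic_subset_Iic.2 hlt.le))

lemma ps_inj {m : ℕ} {u v : Fin m → ℕ} (h : ps u = ps v) : u = v := by
  refine iicSum_inj fun i => ?_
  have := congrFun h i
  unfold ps at this
  omega

lemma sum_ps {m : ℕ} (u : Fin m → ℕ) :
    ∑ i, ps u i = (∑ i ∈ range m, i) + ∑ j, (m - j.val) * u j := by
  unfold ps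
  rw [Finset.sum_add_distrib]
  congr 1
  · exact Fin.sum_univ_eq_sum_range (fun i => i) m
  · have : ∀ i : Fin m, ∑ j ∈ Iic i, u j = ∑ j, if j ∈ Iic i then u j else 0 := by
      intro i
      rw [Finset.sum_ite_mem, Finset.univ_inter]
    simp_rw [this]
    rw [Finset.sum_comm]
    refine Finset.sum_congr rfl fun j _ => ?_
    have : ∀ i : Fin m, (if j ∈ Iic i then u j else 0) = if i ∈ Ici j then u j else 0 := by
      intro i; simp [Finset.mem_Iic, Finset.mem_Ici]
    simp_rw [this]
    rw [Finset.sum_ite_mem, Finset.univ_inter, Finset.sum_const, Fin.card_Ici, smul_eq_mul]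

lemma sum_ps_rev {m : ℕ} (v : Fin m → ℕ) :
    ∑ i, ps (v ∘ Fin.rev) i = (∑ i ∈ range m, i) + ∑ j, (j.val + 1) * v j := by
  rw [sum_ps]
  congr 1
  simp only [Function.comp]
  refine Fintype.sum_equiv Fin.revPerm _ _ fun x => ?_
  have hx := x.isLt
  have h1 : (Fin.revPerm x : Fin m) = Fin.rev x := rfl
  rw [h1]
  congr 1
  rw [Fin.val_rev]
  omega

lemma key (m t : ℕ) :
    m.factorial ^ 2 * ((Fintype.piFinset (fun _ : Fin m => range (t + 1))).filter
      (fun κ => ∑ i, (i.val + 1) * κ i ≤ t)).card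
    ≤ (t + (∑ i ∈ range m, i) + m) ^ m := by
  set G := ∑ i ∈ range m, i with hG
  set T := t + G with hT
  set K := (Fintype.piFinset (fun _ : Fin m => range (t + 1))).filter
      (fun κ => ∑ i, (i.val + 1) * κ i ≤ t) with hK
  set M := (Fintype.piFinset (fun _ : Fin m => range (T + 1))).filter
      (fun u => ∑ i, u i ≤ T) with hM
  have L1 : m.factorial * K.card ≤ M.card := by
    have hsrc : ((univ : Finset (Equiv.Perm (Fin m))) ×ˢ K).card = m.factorial * K.card := by
      rw [Finset.card_product, Finset.card_univ, Fintype.card_perm, Fintype.card_fin]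
    rw [← hsrc]
    apply Finset.card_le_card_of_injOn (fun p : Equiv.Perm (Fin m) × (Fin m → ℕ) => ps (p.2 ∘ Fin.rev) ∘ ⇑p.1)
    · rintro ⟨σ, v⟩ hp
      rw [Finset.mem_coe, Finset.mem_product, hK, Finset.mem_filter] at hp
      obtain ⟨-, -, hv2⟩ := hp
      simp only at hv2
      have hsum : ∑ i, ps (v ∘ Fin.rev) (σ i) = G + ∑ j, (j.val + 1) * v j := by
        rw [Equiv.sum_comp σ (ps (v ∘ Fin.rev)), sum_ps_rev]
      rw [hM, Finset.mem_coe, Finset.mem_filter]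
      constructor
      · rw [Fintype.mem_piFinset]
        intro i
        rw [Finset.mem_range]
        have hle : (ps (v ∘ Fin.rev) ∘ ⇑σ) i ≤ ∑ i', (ps (v ∘ Fin.rev) ∘ ⇑σ) i' :=
          Finset.single_le_sum (fun _ _ => Nat.zero_le _) (Finset.mem_univ i)
        simp only [Function.comp] at hle hsum ⊢
        omega
      · simp only [Function.comp] at hsum ⊢
        omega
    · rintro ⟨σ, v⟩ hp ⟨σ', v'⟩ hp' heq
      simp only at heq
      have himg : ∀ (τ : Equiv.Perm (Fin m)) (f : Fin m → ℕ),
          univ.image (f ∘ ⇑τ) = univ.image f := by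
        intro τ f
        rw [← Finset.image_image, Finset.image_univ_equiv]
      have hps : ps (v ∘ Fin.rev) = ps (v' ∘ Fin.rev) := by
        apply strictMono_image_inj (ps_strictMono _) (ps_strictMono _)
        conv_lhs => rw [← himg σ (ps (v ∘ Fin.rev))]
        conv_rhs => rw [← himg σ' (ps (v' ∘ Fin.rev))]
        rw [heq]
      have hv : v = v' := by
        have hvr := ps_inj hps
        funext j
        have := congrFun hvr (Fin.rev j)
        simpa [Fin.rev_rev] using this
      have hσ : σ = σ' := by
        apply Equiv.ext
        intro i
        apply (ps_strictMono (v ∘ Fin.rev)).injective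
        have := congrFun heq i
        rw [hv, ← hps] at this
        exact this
      rw [Prod.mk.injEq]
      exact ⟨hσ, hv⟩
  have L2 : M.card ≤ (Finset.powersetCard m (range (T + m))).card := by
    apply Finset.card_le_card_of_injOn (fun u => univ.image (ps u))
    · intro u hu
      rw [hM, Finset.mem_coe, Finset.mem_filter] at hu
      obtain ⟨-, hu2⟩ := hu
      rw [Finset.mem_coe, Finset.mem_powersetCard]
      constructor
      · intro x hx
        rw [Finset.mem_image] at hx
        obtain ⟨i, -, rfl⟩ := hx
        rw [Finset.mem_range]
        have h1 : ∑ j ∈ Iic i, u j ≤ ∑ j, u j :=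
          Finset.sum_le_sum_of_subset (Finset.subset_univ _)
        have := i.isLt
        unfold ps
        omega
      · rw [Finset.card_image_of_injective _ (ps_strictMono u).injective, card_univ,
          Fintype.card_fin]
    · intro u hu u' hu' heq
      exact ps_inj (strictMono_image_inj (ps_strictMono _) (ps_strictMono _) heq)
  calc m.factorial ^ 2 * K.card = m.factorial * (m.factorial * K.card) := by ring
    _ ≤ m.factorial * M.card := Nat.mul_le_mul_left _ L1
    _ ≤ m.factorial * (T + m).choose m := by
        refine Nat.mul_le_mul_left _ (L2.trans ?_)
        rw [Finset.card_powersetCard, Finset.card_range]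
    _ = (T + m).descFactorial m := (Nat.descFactorial_eq_factorial_mul_choose _ _).symm
    _ ≤ (T + m) ^ m := Nat.descFactorial_le_pow _ _

/-- Bound on the size of the enumeration set
`G = {(r,k₁,…,k_d) : Σkᵢ|wᵢ| ≤ n, Σ i·kᵢ − t ≤ r ≤ Σ kᵢ}`. -/
theorem stmt18 (d n t : ℕ) (hd : 0 < d) (w : Fin d → ℕ) (hw : ∀ i, 1 ≤ w i) :
    (Nat.card {rk : ℕ × (Fin d → ℕ) //
        (∑ i, rk.2 i * w i) ≤ n ∧
        (∑ i, (i.val + 1) * rk.2 i) ≤ t + rk.1 ∧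
        rk.1 ≤ ∑ i, rk.2 i} : ℝ) ≤
      ((t : ℝ) + 1) * ((t : ℝ) + (d : ℝ) * ((d : ℝ) - 1) / 2) ^ (d - 1) /
          ((d - 1).factorial : ℝ) ^ 2 *
        ((n : ℝ) / (w ⟨0, hd⟩ : ℝ) + 1) := by
  obtain ⟨m, rfl⟩ : ∃ m, d = m + 1 := ⟨d - 1, by omega⟩
  have hzero : (⟨0, hd⟩ : Fin (m + 1)) = 0 := rfl
  rw [hzero]
  have hW : 0 < w 0 := hw 0
  set K := (Fintype.piFinset (fun _ : Fin m => range (t + 1))).filter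
      (fun κ => ∑ i, (i.val + 1) * κ i ≤ t) with hK
  set Tgt := (range (t + 1)) ×ˢ ((range (n / w 0 + 1)) ×ˢ K) with hTgt
  set A : Set (ℕ × (Fin (m + 1) → ℕ)) := {rk | (∑ i, rk.2 i * w i) ≤ n ∧
      (∑ i, (i.val + 1) * rk.2 i) ≤ t + rk.1 ∧ rk.1 ≤ ∑ i, rk.2 i} with hA
  have h0 : Nat.card {rk : ℕ × (Fin (m + 1) → ℕ) //
      (∑ i, rk.2 i * w i) ≤ n ∧
      (∑ i, (i.val + 1) * rk.2 i) ≤ t + rk.1 ∧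
      rk.1 ≤ ∑ i, rk.2 i} = A.ncard := Nat.card_coe_set_eq A
  rw [h0]
  -- main counting bound
  have hmain : A.ncard ≤ Tgt.card := by
    rw [← Set.ncard_coe_finset Tgt]
    apply Set.ncard_le_ncard_of_injOn
      (fun rk : ℕ × (Fin (m + 1) → ℕ) =>
        ((∑ i, rk.2 i) - rk.1, (rk.2 0, fun j : Fin m => rk.2 j.succ)))
    · rintro ⟨r, k⟩ ⟨h1, h2, h3⟩
      simp only at h1 h2 h3
      have hsum1 : (∑ i, k i) ≤ ∑ i, (i.val + 1) * k i :=
        Finset.sum_le_sum fun i _ => Nat.le_mul_of_pos_left (k i) (Nat.succ_pos i.val)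
      have e2 : (∑ i, (i.val + 1) * k i)
          = k 0 + ((∑ j : Fin m, (j.val + 1) * k j.succ) + ∑ j : Fin m, k j.succ) := by
        rw [Fin.sum_univ_succ, ← Finset.sum_add_distrib]
        simp only [Fin.val_zero, Fin.val_succ]
        congr 1
        · ring
        · exact Finset.sum_congr rfl fun j _ => by ring
      have e3 : (∑ i, k i) = k 0 + ∑ j : Fin m, k j.succ := by
        rw [Fin.sum_univ_succ]
      have hS1 : (∑ j : Fin m, (j.val + 1) * k j.succ) ≤ t := by omega
      simp only [Finset.mem_coe, hTgt, Finset.mem_product, Finset.mem_range, hK,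
        Finset.mem_filter, Fintype.mem_piFinset]
      refine ⟨by omega, ?_, ⟨?_, hS1⟩⟩
      · have hk0 : k 0 * w 0 ≤ ∑ i, k i * w i :=
          Finset.single_le_sum (f := fun i => k i * w i)
            (fun _ _ => Nat.zero_le _) (Finset.mem_univ 0)
        have : k 0 ≤ n / w 0 := (Nat.le_div_iff_mul_le hW).mpr (hk0.trans h1)
        omega
      · intro j
        have hj : (j.val + 1) * k j.succ ≤ ∑ j' : Fin m, (j'.val + 1) * k j'.succ :=
          Finset.single_le_sum (f := fun j' : Fin m => (j'.val + 1) * k j'.succ)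
            (fun _ _ => Nat.zero_le _) (Finset.mem_univ j)
        have : k j.succ ≤ (j.val + 1) * k j.succ := Nat.le_mul_of_pos_left _ (Nat.succ_pos _)
        omega
    · rintro ⟨r, k⟩ ⟨-, -, h3⟩ ⟨r', k'⟩ ⟨-, -, h3'⟩ heq
      simp only [Prod.mk.injEq] at heq
      obtain ⟨hs, hk0, hκ⟩ := heq
      have hk : k = k' := by
        funext i
        induction i using Fin.cases with
        | zero => exact hk0
        | succ j => exact congrFun hκ j
      subst hk
      simp only at h3 h3' hs
      have hr : r = r' := by omega
      rw [hr]
  have hTgtcard : Tgt.card = (t + 1) * ((n / w 0 + 1) * K.card) := by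
    simp [hTgt, Finset.card_product]
  -- numeric part
  set G := ∑ i ∈ range m, i with hGdef
  have hGm : ((G : ℝ) + m) = ((m : ℝ) + 1) * m / 2 := by
    have h2 : (∑ i ∈ range (m + 1), i) * 2 = (m + 1) * m := Finset.sum_range_id_mul_two (m + 1)
    have hsum : G + m = ∑ i ∈ range (m + 1), i := by rw [Finset.sum_range_succ]
    have h3 : ((G : ℝ) + m) * 2 = ((m : ℝ) + 1) * m := by
      have := congrArg (Nat.cast (R := ℝ)) (hsum ▸ h2 : (G + m) * 2 = (m + 1) * m)
      push_cast at this
      linarith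
    linarith
  have hkey := key m t
  have hKle : (K.card : ℝ) ≤ ((t : ℝ) + ((m : ℝ) + 1) * m / 2) ^ m / (m.factorial : ℝ) ^ 2 := by
    rw [le_div_iff₀ (by positivity)]
    calc (K.card : ℝ) * (m.factorial : ℝ) ^ 2
        = ((m.factorial ^ 2 * K.card : ℕ) : ℝ) := by push_cast; ring
      _ ≤ (((t + G + m) ^ m : ℕ) : ℝ) := Nat.cast_le.mpr hkey
      _ = ((t : ℝ) + ((m : ℝ) + 1) * m / 2) ^ m := by
          push_cast
          rw [add_assoc, hGm]
  have hnd : ((n / w 0 : ℕ) : ℝ) ≤ (n : ℝ) / (w 0 : ℝ) := Nat.cast_div_le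
  have step1 : (A.ncard : ℝ) ≤ ((t : ℝ) + 1) * ((((n / w 0 : ℕ) : ℝ) + 1) * (K.card : ℝ)) := by
    calc (A.ncard : ℝ) ≤ (Tgt.card : ℝ) := Nat.cast_le.mpr hmain
      _ = _ := by rw [hTgtcard]; push_cast; ring
  refine step1.trans ?_
  simp only [Nat.add_sub_cancel]
  calc ((t : ℝ) + 1) * ((((n / w 0 : ℕ) : ℝ) + 1) * (K.card : ℝ))
      ≤ ((t : ℝ) + 1) * (((n : ℝ) / (w 0 : ℝ) + 1) *
          (((t : ℝ) + ((m : ℝ) + 1) * m / 2) ^ m / (m.factorial : ℝ) ^ 2)) := by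
        apply mul_le_mul_of_nonneg_left ?_ (by positivity)
        apply mul_le_mul (by linarith) hKle (by positivity) (by positivity)
    _ = ((t : ℝ) + 1) * ((t : ℝ) + ((m : ℝ) + 1) * (((m : ℝ) + 1) - 1) / 2) ^ m /
          ((m.factorial : ℝ)) ^ 2 * ((n : ℝ) / (w 0 : ℝ) + 1) := by ring_nf
    _ = _ := by push_cast; ring_nf
end
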